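/- arXiv:2008.09265 — 2 statements merged into one kernel-verified Lean document; each statement's English description precedes it below -/
import Mathlib

section
/- The sum index of the n × m rectangular grid graph equals 3 if m = 2 (ladder graphs), and equals 4 if 3 ≤ m ≤ n. -/
open SimpleGraph Function

def edgePlus {V : Type*} (f : V → ℤ) : Sym2 V → ℤ :=
  Sym2.lift ⟨fun u v => f u + f v, fun u v => by ring⟩

def edgeMinus {V : Type*} (f : V → ℤ) : Sym2 V → ℤ :=
  Sym2.lift ⟨fun u v => |f u - f v|, fun u v => abs_sub_comm _ _⟩

/-- The sum index: the minimum, over injective vertex labelings `f : V → ℤ`,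
of the number of distinct values of `f⁺(uv) = f u + f v` on the edges. -/
noncomputable def sumIndex {V : Type*} (G : SimpleGraph V) : ℕ :=
  sInf {k | ∃ f : V → ℤ, Function.Injective f ∧ (edgePlus f '' G.edgeSet).ncard = k}

/-- The difference index: the minimum, over injective vertex labelings `f : V → ℤ`,
of the number of distinct values of `f⁻(uv) = |f u − f v|` on the edges. -/
noncomputable def diffIndex {V : Type*} (G : SimpleGraph V) : ℕ :=
  sInf {k | ∃ f : V → ℤ, Function.Injective f ∧ (edgeMinus f '' G.edgeSet).ncard = k}

/-- The `n × m` rectangular grid graph. -/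
def gridGraph (n m : ℕ) : SimpleGraph (Fin n × Fin m) :=
  SimpleGraph.fromRel (fun p q => |(p.1 : ℤ) - (q.1 : ℤ)| + |(p.2 : ℤ) - (q.2 : ℤ)| = 1)

/-!
An injective labeling has at least three edge sums around a 4-cycle, and the sums `f v + f w` over
the neighbours `w` of a vertex `v` are pairwise distinct; every grid contains a 4-cycle, and a grid
with `3 ≤ m ≤ n` has a vertex of degree four.

Conversely, label `(i, j)` by `(-1) ^ (i + j) * (a * i + b * j + c)`. Adjacent vertices get
opposite signs, so every edge sum is `±a` or `±b`. For the ladder take `i + 1` (sums `0, ±1`; the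
sign tells the two ends of a rung apart); for `m ≥ 3` take `m * i + j` (sums `±1, ±m`), whose
absolute value is the mixed-radix index of `(i, j)`.
-/

theorem Int.abs_add_abs_eq_one_iff {x y : ℤ} :
    |x| + |y| = 1 ↔ (x = 1 ∨ x = -1) ∧ y = 0 ∨ x = 0 ∧ (y = 1 ∨ y = -1) := by
  constructor
  · intro h
    rcases abs_cases x with ⟨hx, hx'⟩ | ⟨hx, hx'⟩ <;>
      rcases abs_cases y with ⟨hy, hy'⟩ | ⟨hy, hy'⟩ <;>
      omega
  · rintro (⟨rfl | rfl, rfl⟩ | ⟨rfl, rfl | rfl⟩) <;> norm_num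

section SumIndex

variable {V : Type*} {G : SimpleGraph V} {f : V → ℤ}

lemma add_mem_edgePlus_image {u v : V} (h : G.Adj u v) : f u + f v ∈ edgePlus f '' G.edgeSet :=
  ⟨s(u, v), h, rfl⟩

theorem sumIndex_eq_of_forall_le_of_exists_le {k : ℕ}
    (hlow : ∀ f : V → ℤ, Injective f → k ≤ (edgePlus f '' G.edgeSet).ncard)
    (hup : ∃ f : V → ℤ, Injective f ∧ (edgePlus f '' G.edgeSet).ncard ≤ k) :
    sumIndex G = k := by
  unfold sumIndex
  obtain ⟨f, hf, hle⟩ := hup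
  have hk : (edgePlus f '' G.edgeSet).ncard = k := hle.antisymm (hlow f hf)
  refine le_antisymm (Nat.sInf_le ⟨f, hf, hk⟩) (le_csInf ⟨k, f, hf, hk⟩ ?_)
  rintro _ ⟨g, hg, rfl⟩
  exact hlow g hg

variable [Finite V]

/-- Consecutive edge sums around the cycle differ because `f a ≠ f c` and `f b ≠ f d`, and for
the same reason the two pairs of opposite sums cannot both coincide. -/
theorem three_le_ncard_edgePlus_image_of_cycle {a b c d : V} (hf : Injective f)
    (hab : G.Adj a b) (hbc : G.Adj b c) (hcd : G.Adj c d) (hda : G.Adj d a)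
    (hac : a ≠ c) (hbd : b ≠ d) : 3 ≤ (edgePlus f '' G.edgeSet).ncard := by
  have hac' : f a ≠ f c := hf.ne hac
  have hbd' : f b ≠ f d := hf.ne hbd
  rw [Nat.succ_le_iff, Set.two_lt_ncard_iff]
  by_cases hopp : f a + f b = f c + f d
  · refine ⟨_, _, _, add_mem_edgePlus_image hab, add_mem_edgePlus_image hbc,
      add_mem_edgePlus_image hda, ?_, ?_, ?_⟩ <;> omega
  · refine ⟨_, _, _, add_mem_edgePlus_image hab, add_mem_edgePlus_image hbc,
      add_mem_edgePlus_image hcd, ?_, hopp, ?_⟩ <;> omega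

theorem ncard_neighborSet_le_ncard_edgePlus_image (hf : Injective f) (v : V) :
    (G.neighborSet v).ncard ≤ (edgePlus f '' G.edgeSet).ncard :=
  Set.ncard_le_ncard_of_injOn (f v + f ·) (fun _ h => add_mem_edgePlus_image h)
    (fun _ _ _ _ h => hf (add_left_cancel h))

end SumIndex

section Grid

variable {n m : ℕ}

theorem gridGraph_adj_iff {p q : Fin n × Fin m} :
    (gridGraph n m).Adj p q ↔ |(p.1 : ℤ) - q.1| + |(p.2 : ℤ) - q.2| = 1 := by
  rw [gridGraph, fromRel_adj, abs_sub_comm (q.1 : ℤ), abs_sub_comm (q.2 : ℤ), or_self,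
    and_iff_right_iff_imp]
  rintro h rfl
  simp at h

theorem three_le_ncard_edgePlus_image_gridGraph (hn : 2 ≤ n) (hm : 2 ≤ m)
    {f : Fin n × Fin m → ℤ} (hf : Injective f) :
    3 ≤ (edgePlus f '' (gridGraph n m).edgeSet).ncard :=
  three_le_ncard_edgePlus_image_of_cycle hf
    (a := (⟨0, by omega⟩, ⟨0, by omega⟩)) (b := (⟨0, by omega⟩, ⟨1, by omega⟩))
    (c := (⟨1, by omega⟩, ⟨1, by omega⟩)) (d := (⟨1, by omega⟩, ⟨0, by omega⟩))
    (by norm_num [gridGraph_adj_iff]) (by norm_num [gridGraph_adj_iff])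
    (by norm_num [gridGraph_adj_iff]) (by norm_num [gridGraph_adj_iff])
    (by simp [Prod.ext_iff]) (by simp [Prod.ext_iff])

theorem three_lt_ncard_neighborSet_gridGraph (hn : 3 ≤ n) (hm : 3 ≤ m) :
    3 < ((gridGraph n m).neighborSet (⟨1, by omega⟩, ⟨1, by omega⟩)).ncard := by
  rw [Set.three_lt_ncard_iff]
  refine ⟨(⟨0, by omega⟩, ⟨1, by omega⟩), (⟨2, by omega⟩, ⟨1, by omega⟩),
    (⟨1, by omega⟩, ⟨0, by omega⟩), (⟨1, by omega⟩, ⟨2, by omega⟩), ?_⟩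
  simp [gridGraph_adj_iff, Prod.ext_iff]

end Grid

section Labeling

variable {n m : ℕ}

def checkerLabel (a b c : ℤ) (p : Fin n × Fin m) : ℤ :=
  (-1) ^ (p.1.val + p.2.val) * (a * p.1 + b * p.2 + c)

theorem checkerLabel_add_mem_of_adj (a b c : ℤ) {p q : Fin n × Fin m}
    (h : (gridGraph n m).Adj p q) :
    checkerLabel a b c p + checkerLabel a b c q ∈ ({a, -a, b, -b} : Set ℤ) := by
  rw [gridGraph_adj_iff, Int.abs_add_abs_eq_one_iff] at h
  have hsign : (-1 : ℤ) ^ (q.1.val + q.2.val) = -(-1) ^ (p.1.val + p.2.val) := by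
    obtain hq | hp : q.1.val + q.2.val = p.1.val + p.2.val + 1 ∨
        p.1.val + p.2.val = q.1.val + q.2.val + 1 := by omega
    · rw [hq, pow_succ, mul_neg_one]
    · rw [hp, pow_succ, mul_neg_one, neg_neg]
  have hdiff : a * ((p.1 : ℤ) - q.1) + b * ((p.2 : ℤ) - q.2) ∈ ({a, -a, b, -b} : Set ℤ) := by
    rcases h with ⟨h1 | h1, h2⟩ | ⟨h1, h2 | h2⟩ <;> simp [h1, h2]
  have hsum : checkerLabel a b c p + checkerLabel a b c q =
      (-1) ^ (p.1.val + p.2.val) * (a * ((p.1 : ℤ) - q.1) + b * ((p.2 : ℤ) - q.2)) := by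
    rw [checkerLabel, checkerLabel, hsign]
    ring
  rw [hsum]
  rcases neg_one_pow_eq_or ℤ (p.1.val + p.2.val) with hp | hp
  · simpa [hp] using hdiff
  · simp only [Set.mem_insert_iff, Set.mem_singleton_iff] at hdiff
    rcases hdiff with hd | hd | hd | hd <;> simp [hp, hd]

theorem edgePlus_checkerLabel_image_subset (a b c : ℤ) :
    edgePlus (checkerLabel a b c) '' (gridGraph n m).edgeSet ⊆ {a, -a, b, -b} := by
  rintro _ ⟨e, he, rfl⟩
  induction e using Sym2.ind with
  | h p q => exact checkerLabel_add_mem_of_adj a b c he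

theorem abs_checkerLabel {a b c : ℤ} (p : Fin n × Fin m) (h : 0 ≤ a * p.1 + b * p.2 + c) :
    |checkerLabel a b c p| = a * p.1 + b * p.2 + c := by
  rw [checkerLabel, abs_mul, abs_pow, abs_neg, abs_one, one_pow, one_mul, abs_of_nonneg h]

theorem checkerLabel_ladder_injective : Injective (checkerLabel 1 0 1 : Fin n × Fin 2 → ℤ) := by
  intro p q h
  have h1 : p.1 = q.1 := by
    have := congrArg abs h
    rw [abs_checkerLabel p (by positivity), abs_checkerLabel q (by positivity)] at this
    exact Fin.ext (by simpa using this)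
  rw [checkerLabel, checkerLabel, h1, pow_add, pow_add] at h
  simp only [one_mul, zero_mul, add_zero] at h
  have h2 : (-1 : ℤ) ^ p.2.val = (-1) ^ q.2.val :=
    mul_left_cancel₀ (by positivity) (mul_right_cancel₀ (by positivity) h)
  refine Prod.ext h1 (Fin.ext ?_)
  have hp := p.2.isLt
  have hq := q.2.isLt
  interval_cases (p.2 : ℕ) <;> interval_cases (q.2 : ℕ) <;> simp_all

theorem checkerLabel_radix_injective :
    Injective (checkerLabel m 1 0 : Fin n × Fin m → ℤ) := by
  intro p q h
  have := congrArg abs h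
  rw [abs_checkerLabel p (by positivity), abs_checkerLabel q (by positivity)] at this
  apply finProdFinEquiv.injective
  ext
  simp only [finProdFinEquiv_apply_val]
  omega

theorem ncard_edgePlus_checkerLabel_image_le_four (a b c : ℤ) :
    (edgePlus (checkerLabel a b c) '' (gridGraph n m).edgeSet).ncard ≤ 4 := by
  refine (Set.ncard_le_ncard (edgePlus_checkerLabel_image_subset a b c)).trans ?_
  rw [← Finset.coe_pair, ← Finset.coe_insert, ← Finset.coe_insert, Set.ncard_coe_finset]
  exact Finset.card_le_four

theorem ncard_edgePlus_checkerLabel_image_le_three (a c : ℤ) :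
    (edgePlus (checkerLabel a 0 c) '' (gridGraph n m).edgeSet).ncard ≤ 3 := by
  refine (Set.ncard_le_ncard (edgePlus_checkerLabel_image_subset a 0 c)).trans ?_
  rw [neg_zero, Set.pair_eq_singleton, ← Finset.coe_singleton, ← Finset.coe_insert,
    ← Finset.coe_insert, Set.ncard_coe_finset]
  exact Finset.card_le_three

end Labeling

theorem stmt7_general (n m : ℕ) (hnm : m ≤ n) :
    (m = 2 → sumIndex (gridGraph n m) = 3) ∧
    (3 ≤ m → sumIndex (gridGraph n m) = 4) := by
  constructor
  · rintro rfl
    exact sumIndex_eq_of_forall_le_of_exists_le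
      (fun _ hf => three_le_ncard_edgePlus_image_gridGraph hnm le_rfl hf)
      ⟨_, checkerLabel_ladder_injective, ncard_edgePlus_checkerLabel_image_le_three 1 1⟩
  · intro hm
    exact sumIndex_eq_of_forall_le_of_exists_le
      (fun _ hf => (three_lt_ncard_neighborSet_gridGraph (hm.trans hnm) hm).trans_le
        (ncard_neighborSet_le_ncard_edgePlus_image hf _))
      ⟨_, checkerLabel_radix_injective, ncard_edgePlus_checkerLabel_image_le_four _ _ _⟩

theorem stmt7 (n m : ℕ) (hm : 2 ≤ m) (hnm : m ≤ n) :
    (m = 2 → sumIndex (gridGraph n m) = 3) ∧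
    (3 ≤ m → sumIndex (gridGraph n m) = 4) :=
  stmt7_general n m hnm
end

section
/- For the d-dimensional rectangular grid G with all side lengths at least 3 (so maximum degree 2d), the sum index of G equals 2d. -/
open SimpleGraph Function

/-- The `d`-dimensional rectangular grid with side lengths `n 0, …, n (d−1)`:
two vertices are adjacent iff they differ by `1` in exactly one coordinate. -/
def gridD (d : ℕ) (n : Fin d → ℕ) : SimpleGraph ((i : Fin d) → Fin (n i)) :=
  SimpleGraph.fromRel (fun p q => (∑ i, |(p i : ℤ) - (q i : ℤ)|) = 1)

/-!
For any injective labelling `f`, the sums `f v + f w` over the neighbours `w` of a vertex `v` are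
distinct, and an interior vertex of the grid has `2d` neighbours. Conversely, encode a grid point
`p` by its mixed-radix number `W p` and label it `(-1)^(p₀ + ⋯ + p_{d-1}) (W p + 1)`. Adjacent
points get opposite signs, so an edge sum is `±(W p - W q)`, and along an edge in direction `i`
this difference is `±n₀ ⋯ n_{i-1}`: only `2d` values occur.
-/

theorem Fintype.sum_sub_sum_of_eq_of_ne {ι G : Type*} [Fintype ι] [AddCommGroup G] {f g : ι → G}
    (i : ι) (h : ∀ j ≠ i, f j = g j) : ∑ j, f j - ∑ j, g j = f i - g i := by
  rw [← Finset.sum_sub_distrib, Fintype.sum_eq_single i fun j hj => by rw [h j hj, sub_self]]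

theorem Fintype.exists_eq_one_of_sum_eq_one {ι : Type*} [Fintype ι] {F : ι → ℤ}
    (h0 : ∀ i, 0 ≤ F i) (hs : ∑ i, F i = 1) : ∃ i, F i = 1 ∧ ∀ j ≠ i, F j = 0 := by
  classical
  obtain ⟨i, hi⟩ : ∃ i, F i ≠ 0 := by
    by_contra! h
    simp [h] at hs
  have hsum_erase : ∑ j ∈ Finset.univ.erase i, F j = 1 - F i := by
    rw [← hs, ← Finset.add_sum_erase _ F (Finset.mem_univ i), add_sub_cancel_left]
  have hsum_erase_nonneg : 0 ≤ ∑ j ∈ Finset.univ.erase i, F j := Finset.sum_nonneg fun j _ => h0 j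
  have hFi : F i = 1 := by have := h0 i; omega
  refine ⟨i, hFi, fun j hj => ?_⟩
  exact (Finset.sum_eq_zero_iff_of_nonneg (s := Finset.univ.erase i) fun j _ => h0 j).1 (by omega) j
    (Finset.mem_erase.2 ⟨hj, Finset.mem_univ j⟩)

section SumIndex

variable {V : Type*} (G : SimpleGraph V)

theorem sumIndex_le {f : V → ℤ} (hf : Injective f) :
    sumIndex G ≤ (edgePlus f '' G.edgeSet).ncard :=
  Nat.sInf_le ⟨f, hf, rfl⟩

theorem le_sumIndex [Countable V] {k : ℕ}
    (h : ∀ f : V → ℤ, Injective f → k ≤ (edgePlus f '' G.edgeSet).ncard) :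
    k ≤ sumIndex G := by
  obtain ⟨f, hf⟩ := Countable.exists_injective_nat V
  exact le_csInf ⟨_, _, Nat.cast_injective.comp hf, rfl⟩ fun _ ⟨g, hg, hk⟩ => hk ▸ h g hg

theorem ncard_neighborSet_le_sumIndex [Finite V] (v : V) :
    (G.neighborSet v).ncard ≤ sumIndex G := by
  refine le_sumIndex G fun f hf => ?_
  exact Set.ncard_le_ncard_of_injOn (fun w => f v + f w) (fun w hw => ⟨s(v, w), hw, rfl⟩)
    (fun w _ w' _ h => hf (add_left_cancel h)) (Set.toFinite _)

end SumIndex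

section SignedLabel

variable {V : Type*} (s W : V → ℕ)

def signedLabel (v : V) : ℤ := (-1) ^ s v * (W v + 1)

theorem abs_signedLabel (v : V) : |signedLabel s W v| = W v + 1 := by
  rw [signedLabel, abs_mul, abs_pow, abs_neg, abs_one, one_pow, one_mul]
  exact abs_of_nonneg (by positivity)

theorem signedLabel_injective (hW : Injective W) : Injective (signedLabel s W) := by
  intro p q h
  have := abs_signedLabel s W p
  rw [h, abs_signedLabel] at this
  exact hW (by omega)

theorem abs_signedLabel_add {p q : V} (h : s p = s q + 1 ∨ s q = s p + 1) :
    |signedLabel s W p + signedLabel s W q| = |(W p : ℤ) - W q| := by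
  have abs_neg_one_pow_mul (k : ℕ) (x : ℤ) : |(-1) ^ k * x| = |x| := by simp [abs_mul]
  rcases h with h | h
  · rw [signedLabel, signedLabel, h, abs_sub_comm, ← abs_neg_one_pow_mul (s q) ((W q : ℤ) - W p)]
    congr 1
    ring
  · rw [signedLabel, signedLabel, h, ← abs_neg_one_pow_mul (s p) ((W p : ℤ) - W q)]
    congr 1
    ring

theorem sumIndex_le_two_mul_card (G : SimpleGraph V)
    (hs : ∀ p q, G.Adj p q → s p = s q + 1 ∨ s q = s p + 1) (hW : Injective W) (D : Finset ℤ)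
    (hD : ∀ p q, G.Adj p q → |(W p : ℤ) - W q| ∈ D) :
    sumIndex G ≤ 2 * D.card := by
  have hsub : edgePlus (signedLabel s W) '' G.edgeSet ⊆ ↑(D ∪ D.image Neg.neg) := by
    rintro _ ⟨e, he, rfl⟩
    induction e using Sym2.ind with
    | _ p q =>
      have hmem := abs_signedLabel_add s W (hs p q he) ▸ hD p q he
      change signedLabel s W p + signedLabel s W q ∈ D ∪ D.image Neg.neg
      rcases abs_choice (signedLabel s W p + signedLabel s W q) with h | h <;> rw [h] at hmem
      · exact Finset.mem_union_left _ hmem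
      · exact Finset.mem_union_right _ (Finset.mem_image.2 ⟨_, hmem, neg_neg _⟩)
  calc sumIndex G ≤ _ := sumIndex_le G (signedLabel_injective s W hW)
    _ ≤ (D ∪ D.image Neg.neg).card :=
      (Set.ncard_le_ncard hsub (Finset.finite_toSet _)).trans_eq (Set.ncard_coe_finset _)
    _ ≤ D.card + (D.image Neg.neg).card := Finset.card_union_le _ _
    _ = 2 * D.card := by rw [Finset.card_image_of_injective _ neg_injective, two_mul]

end SignedLabel

section Grid

variable {d : ℕ} {n : Fin d → ℕ}

theorem gridD_adj_iff {p q : ∀ i, Fin (n i)} :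
    (gridD d n).Adj p q ↔ ∃ i, |(p i : ℤ) - q i| = 1 ∧ ∀ j ≠ i, p j = q j := by
  rw [gridD, fromRel_adj]
  constructor
  · rintro ⟨-, h⟩
    have hsum : ∑ i, |(p i : ℤ) - q i| = 1 := by
      rcases h with h | h
      · exact h
      · simpa only [abs_sub_comm] using h
    obtain ⟨i, hi, hj⟩ := Fintype.exists_eq_one_of_sum_eq_one (fun _ => abs_nonneg _) hsum
    exact ⟨i, hi, fun j hji => Fin.ext (by have := hj j hji; rw [abs_eq_zero] at this; omega)⟩
  · rintro ⟨i, hi, hj⟩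
    refine ⟨fun hpq => by simp [hpq] at hi, Or.inl ?_⟩
    rw [Fintype.sum_eq_single i fun j hji => by rw [hj j hji, sub_self, abs_zero], hi]

theorem sum_val_eq_or_of_gridD_adj {p q : ∀ i, Fin (n i)} (h : (gridD d n).Adj p q) :
    ∑ i, (p i : ℕ) = ∑ i, (q i : ℕ) + 1 ∨ ∑ i, (q i : ℕ) = ∑ i, (p i : ℕ) + 1 := by
  obtain ⟨i, hi, hj⟩ := gridD_adj_iff.1 h
  have hsub : ((∑ j, (p j : ℕ) : ℕ) : ℤ) - (∑ j, (q j : ℕ) : ℕ) = (p i : ℤ) - q i := by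
    push_cast
    exact Fintype.sum_sub_sum_of_eq_of_ne i fun j hji => by rw [hj j hji]
  rcases (abs_eq zero_le_one).1 hi with hi | hi <;> omega

def placeValue (n : Fin d → ℕ) (i : Fin d) : ℕ := ∏ j : Fin i, n (Fin.castLE i.is_lt.le j)

theorem abs_sub_finPiFinEquiv_of_gridD_adj {p q : ∀ i, Fin (n i)} (h : (gridD d n).Adj p q) :
    ∃ i, |((finPiFinEquiv p : ℕ) : ℤ) - (finPiFinEquiv q : ℕ)| = placeValue n i := by
  obtain ⟨i, hi, hj⟩ := gridD_adj_iff.1 h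
  refine ⟨i, ?_⟩
  rw [finPiFinEquiv_apply, finPiFinEquiv_apply]
  push_cast
  rw [Fintype.sum_sub_sum_of_eq_of_ne i fun j hji => by rw [hj j hji], ← sub_mul, abs_mul, hi,
    one_mul, placeValue]
  push_cast
  exact abs_of_nonneg (by positivity)

theorem exists_two_mul_le_ncard_neighborSet_gridD (hn : ∀ i, 3 ≤ n i) :
    ∃ v, 2 * d ≤ ((gridD d n).neighborSet v).ncard := by
  let v : ∀ i, Fin (n i) := fun i => ⟨1, by have := hn i; omega⟩
  let w : Fin d × Bool → ∀ i, Fin (n i) := fun x =>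
    update v x.1 ⟨if x.2 then 2 else 0, by have := hn x.1; split <;> omega⟩
  have hw : Injective w := by
    rintro ⟨i, b⟩ ⟨i', b'⟩ h
    have hi := congrArg (fun p => (p i : ℕ)) h
    by_cases hii : i = i'
    · subst hii
      cases b <;> cases b' <;> simp_all [w]
    · simp only [w, update_self, update_of_ne hii, v] at hi
      split at hi <;> omega
  refine ⟨v, ?_⟩
  calc 2 * d = (Set.range w).ncard := by
        rw [Set.ncard_range_of_injective hw, Nat.card_eq_fintype_card]
        simp [mul_comm]
    _ ≤ _ := Set.ncard_le_ncard ?_ (Set.toFinite _)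
  rintro _ ⟨⟨i, b⟩, rfl⟩
  refine gridD_adj_iff.2 ⟨i, ?_, fun j hj => (update_of_ne hj _ _).symm⟩
  cases b <;> simp [w, v]

end Grid

theorem stmt8_general (d : ℕ) (n : Fin d → ℕ) (hn : ∀ i, 3 ≤ n i) :
    sumIndex (gridD d n) = 2 * d := by
  refine le_antisymm ?_ ?_
  · calc sumIndex (gridD d n)
        ≤ 2 * (Finset.univ.image fun i => (placeValue n i : ℤ)).card :=
          sumIndex_le_two_mul_card (fun p => ∑ i, (p i : ℕ)) (fun p => finPiFinEquiv p)
            (gridD d n) (fun _ _ => sum_val_eq_or_of_gridD_adj)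
            (Fin.val_injective.comp finPiFinEquiv.injective) _ fun _ _ h => by
              obtain ⟨i, hi⟩ := abs_sub_finPiFinEquiv_of_gridD_adj h
              exact Finset.mem_image.2 ⟨i, Finset.mem_univ i, hi.symm⟩
      _ ≤ 2 * d := by
          gcongr
          exact Finset.card_image_le.trans_eq (Finset.card_fin d)
  · obtain ⟨v, hv⟩ := exists_two_mul_le_ncard_neighborSet_gridD hn
    exact hv.trans (ncard_neighborSet_le_sumIndex _ v)

theorem stmt8 (d : ℕ) (hd : 0 < d) (n : Fin d → ℕ) (hn : ∀ i, 3 ≤ n i) :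
    sumIndex (gridD d n) = 2 * d :=
  stmt8_general d n hn
end
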